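/- arXiv:math/0109122 — 4 statements merged into one kernel-verified Lean document; each statement's English description precedes it below -/
import Mathlib

section
/- Let A, B be commutative algebras over a field of characteristic zero and f : A → B a Frobenius n-homomorphism. Then the map Φ_n(f)/n! : S^n A → B, restricted to the subalgebra of symmetric tensors in A^{⊗n}, is a ring homomorphism. -/
/-!
Splitting off the cycle through `0` (via `Equiv.Perm.decomposeFin`) gives the recursion
`Φ_{n+1}(f)(b, a) = f(b) Φ_n(f)(a) - ∑ⱼ Φ_n(f)(a₁, …, b aⱼ, …, a_n)`.
When `Φ_{n+1}(f) ≡ 0` this absorbs `f(b)` into `Φ_n(f)`, and induction on `l` shows that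
`Φ_n(f)(a) Φ_l(f)(b)` is the sum, over injections `g : [l] → [n]`, of `Φ_n(f)` at
`aᵢ ∏_{g j = i} b_j`.
For `l = n` the injections are the permutations, so `M x · M y = ∑_τ M (x · τ y)`, which is
`n! M (x y)` when `y` is symmetric; and `Φ_n(f)(1, …, 1) = f(1) (f(1) - 1) ⋯ (f(1) - n + 1) = n!`.
-/

open Finset

variable {A B : Type*} [CommRing A] [CommRing B]
/-- The Frobenius term `f_σ(a₁,…,a_n)`: the product over the cycles of `σ`
(including fixed points) of `f` applied to the product of the `aᵢ` along the cycle. -/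
def frobTerm (f : A → B) {n : ℕ} (a : Fin n → A) (σ : Equiv.Perm (Fin n)) : B :=
  ∏ i ∈ Finset.univ.filter (fun i => ∀ j, σ.SameCycle i j → i ≤ j),
    f (∏ j ∈ Finset.univ.filter (fun j => σ.SameCycle i j), a j)

/-- The Frobenius transformation (closed formula):
`Φ_n(f)(a₁,…,a_n) = ∑_{σ∈Σ_n} ε(σ) f_σ(a₁,…,a_n)`. -/
def PhiPerm (f : A → B) {n : ℕ} (a : Fin n → A) : B :=
  ∑ σ : Equiv.Perm (Fin n), (Equiv.Perm.sign σ : ℤ) • frobTerm f a σ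

/-- `f` is a Frobenius `n`-homomorphism: `Φ_{n+1}(f) ≡ 0` and `f(1) = n`. -/
def IsFrobeniusHom (f : A → B) (n : ℕ) : Prop :=
  (∀ a : Fin (n + 1) → A, PhiPerm f a = 0) ∧ f 1 = (n : B)


namespace Equiv.Perm

theorem SameCycle.map_of_step {α β : Type*} [Finite α] {σ : Perm α} {τ : Perm β} (π : α → β)
    (hπ : ∀ u, τ.SameCycle (π u) (π (σ u))) {u v : α} (h : σ.SameCycle u v) :
    τ.SameCycle (π u) (π v) := by
  obtain ⟨k, rfl⟩ := h.exists_nat_pow_eq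
  clear h
  induction k with
  | zero => exact SameCycle.refl _ _
  | succ k ih => exact ih.trans (by rw [pow_succ', mul_apply]; exact hπ _)

variable {n : ℕ}

theorem sameCycle_decomposeFin_symm_succ_succ (p : Fin (n + 1)) (e : Perm (Fin n)) (x y : Fin n) :
    (decomposeFin.symm (p, e)).SameCycle x.succ y.succ ↔ e.SameCycle x y := by
  set σ := decomposeFin.symm (p, e)
  constructor
  · -- `π` collapses `0` onto `p`, so it is invariant under `swap 0 p` and intertwines `σ` with `e`
    let π : Fin (n + 1) → Fin n := Fin.cases (Fin.cases x id p) id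
    have hπ_swap : ∀ z, π (swap 0 p z) = π z := by
      intro z
      have h0p : π 0 = π p := by cases p using Fin.cases <;> rfl
      rcases eq_or_ne z 0 with rfl | hz0
      · rw [swap_apply_left, h0p]
      rcases eq_or_ne z p with rfl | hzp
      · rw [swap_apply_right, h0p]
      · rw [swap_apply_of_ne_of_ne hz0 hzp]
    refine SameCycle.map_of_step π (fun u => ?_)
    cases u using Fin.cases with
    | zero => rw [decomposeFin_symm_apply_zero, ← hπ_swap 0, swap_apply_left]
    | succ u =>
      rw [decomposeFin_symm_apply_succ, hπ_swap]
      exact sameCycle_apply_right.2 .rfl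
  · refine SameCycle.map_of_step Fin.succ (fun u => ?_)
    have hstep : σ.SameCycle u.succ (σ u.succ) := sameCycle_apply_right.2 .rfl
    have hσ : σ u.succ = swap 0 p (e u).succ := decomposeFin_symm_apply_succ e p u
    by_cases hp : (e u).succ = p
    · have hσ0 : σ 0 = (e u).succ := by rw [decomposeFin_symm_apply_zero, hp]
      rw [hσ, hp, swap_apply_right] at hstep
      exact hstep.trans (hσ0 ▸ sameCycle_apply_right.2 .rfl)
    · rwa [hσ, swap_apply_of_ne_of_ne (Fin.succ_ne_zero _) hp] at hstep

theorem sameCycle_decomposeFin_symm_zero_succ (q : Fin n) (e : Perm (Fin n)) (y : Fin n) :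
    (decomposeFin.symm (q.succ, e)).SameCycle 0 y.succ ↔ e.SameCycle q y := by
  have h0 : (decomposeFin.symm (q.succ, e)).SameCycle 0 q.succ :=
    decomposeFin_symm_apply_zero q.succ e ▸ sameCycle_apply_right.2 .rfl
  rw [← sameCycle_decomposeFin_symm_succ_succ q.succ e]
  exact ⟨h0.symm.trans, h0.trans⟩

theorem sameCycle_decomposeFin_symm_zero_iff (e : Perm (Fin n)) (y : Fin (n + 1)) :
    (decomposeFin.symm (0, e)).SameCycle 0 y ↔ y = 0 :=
  ⟨fun h => (h.eq_of_left (decomposeFin_symm_apply_zero 0 e)).symm, by rintro rfl; rfl⟩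

end Equiv.Perm

section FiberMul

variable {R ι κ : Type*} [CommMonoid R] [Fintype κ] [DecidableEq ι]

def fiberMul (a : ι → R) (g : κ → ι) (b : κ → R) : ι → R :=
  fun i => a i * ∏ j ∈ univ.filter (g · = i), b j

theorem fiberMul_of_isEmpty [IsEmpty κ] (a : ι → R) (g : κ → ι) (b : κ → R) :
    fiberMul a g b = a := by
  ext i
  simp [fiberMul]

theorem fiberMul_cons {l : ℕ} (a : ι → R) (i : ι) (g : Fin l → ι) (c : R) (b : Fin l → R) :
    fiberMul a (Fin.cons i g) (Fin.cons c b) = fiberMul (Function.update a i (c * a i)) g b := by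
  ext m
  rcases eq_or_ne i m with rfl | him
  · simp only [fiberMul, prod_filter, Fin.prod_univ_succ, Fin.cons_zero, Fin.cons_succ,
      Function.update_self, if_pos]
    ac_rfl
  · simp only [fiberMul, prod_filter, Fin.prod_univ_succ, Fin.cons_zero, Fin.cons_succ,
      Function.update_of_ne him.symm, if_neg him, one_mul]

theorem fiberMul_update_of_injective {g : κ → ι} (hg : Function.Injective g) [DecidableEq κ]
    (a : ι → R) (b : κ → R) (j : κ) (c : R) :
    fiberMul a g (Function.update b j (c * b j)) =
      fiberMul (Function.update a (g j) (c * a (g j))) g b := by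
  ext m
  simp only [fiberMul, Function.update_apply]
  split_ifs with hm
  · subst hm
    have hfiber : univ.filter (g · = g j) = {j} := by
      ext j'
      simp [hg.eq_iff]
    simp only [hfiber, prod_singleton, if_true]
    ac_rfl
  · refine congrArg _ (prod_congr rfl fun j' hj' => if_neg ?_)
    rintro rfl
    exact hm (mem_filter.1 hj').2.symm

theorem fiberMul_perm [Fintype ι] (a b : ι → R) (τ : Equiv.Perm ι) :
    fiberMul a τ b = fun i => a i * b (τ.symm i) := by
  ext i
  have hfiber : univ.filter (τ · = i) = {τ.symm i} := by
    ext j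
    simp [Equiv.eq_symm_apply]
  simp only [fiberMul, hfiber, prod_singleton]

end FiberMul

theorem Function.Embedding.sum_subtype_notMem_range {ι κ M : Type*} [Fintype ι] [Fintype κ]
    [DecidableEq ι] [AddCommGroup M] (g : κ ↪ ι) [Fintype {i // i ∉ Set.range g}] (F : ι → M) :
    ∑ i : {i // i ∉ Set.range g}, F i = ∑ i, F i - ∑ j, F (g j) := by
  rw [eq_sub_iff_add_eq, ← sum_subtype (univ.map g)ᶜ (by simp), ← sum_map univ g F,
    sum_compl_add_sum]

section FrobeniusTerm

open Equiv Perm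

variable (f : A → B) {n : ℕ}

theorem frobTerm_eq_mul_of_sameCycle_succ_iff (σ : Perm (Fin (n + 1))) (e : Perm (Fin n))
    (h : ∀ x y, σ.SameCycle x.succ y.succ ↔ e.SameCycle x y) (a : Fin (n + 1) → A) :
    frobTerm f a σ = f (∏ j ∈ univ.filter (σ.SameCycle 0), a j) *
      ∏ i ∈ univ.filter (fun i => (∀ j, e.SameCycle i j → i ≤ j) ∧ ¬ σ.SameCycle 0 i.succ),
        f (∏ j ∈ univ.filter (e.SameCycle i), a j.succ) := by
  have hmin : ∀ i : Fin n, (∀ j, σ.SameCycle i.succ j → i.succ ≤ j) ↔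
      (∀ j, e.SameCycle i j → i ≤ j) ∧ ¬ σ.SameCycle 0 i.succ := by
    intro i
    simp only [Fin.forall_fin_succ, h, Fin.succ_le_succ_iff, Fin.le_zero_iff, Fin.succ_ne_zero,
      imp_false, sameCycle_comm (x := i.succ) (y := 0)]
    tauto
  have hcyc : ∀ i : Fin n, ¬ σ.SameCycle 0 i.succ →
      ∏ j ∈ univ.filter (σ.SameCycle i.succ), a j =
        ∏ j ∈ univ.filter (e.SameCycle i), a j.succ := by
    intro i hi
    rw [prod_filter, prod_filter, Fin.prod_univ_succ, if_neg (fun h' => hi h'.symm), one_mul]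
    simp only [h]
  rw [frobTerm, prod_filter, Fin.prod_univ_succ, if_pos (fun j _ => Fin.zero_le j)]
  congr 1
  rw [prod_filter]
  refine prod_congr rfl fun i _ => ?_
  simp only [hmin]
  split_ifs with hi
  · rw [hcyc i hi.2]
  · rfl

theorem frobTerm_cons_decomposeFin_symm_zero (b : A) (a : Fin n → A) (e : Perm (Fin n)) :
    frobTerm f (Fin.cons b a) (decomposeFin.symm (0, e)) = f b * frobTerm f a e := by
  rw [frobTerm_eq_mul_of_sameCycle_succ_iff f _ e (sameCycle_decomposeFin_symm_succ_succ 0 e)]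
  simp only [sameCycle_decomposeFin_symm_zero_iff, Fin.succ_ne_zero, not_false_eq_true, and_true,
    filter_eq', mem_univ, if_true, prod_singleton, Fin.cons_zero, Fin.cons_succ]
  rfl

theorem frobTerm_update_mul (a : Fin n → A) (b : A) (q : Fin n) (e : Perm (Fin n)) :
    frobTerm f (Function.update a q (b * a q)) e = f (b * ∏ j ∈ univ.filter (e.SameCycle q), a j) *
      ∏ i ∈ univ.filter (fun i => (∀ j, e.SameCycle i j → i ≤ j) ∧ ¬ e.SameCycle q i),
        f (∏ j ∈ univ.filter (e.SameCycle i), a j) := by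
  set C := univ.filter (e.SameCycle q)
  have hqC : q ∈ C := mem_filter.2 ⟨mem_univ q, .rfl⟩
  -- the least element `m` of the cycle of `q` indexes the only factor that sees the update
  set m := C.min' ⟨q, hqC⟩
  have hqm : e.SameCycle q m := (mem_filter.1 (C.min'_mem _)).2
  have hm_le : ∀ j, e.SameCycle q j → m ≤ j :=
    fun j hj => C.min'_le j (mem_filter.2 ⟨mem_univ j, hj⟩)
  have hm_mem : m ∈ univ.filter (fun i => ∀ j, e.SameCycle i j → i ≤ j) :=
    mem_filter.2 ⟨mem_univ m, fun j hj => hm_le j (hqm.trans hj)⟩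
  have hCm : univ.filter (e.SameCycle m) = C := by
    ext j
    simp only [C, mem_filter, mem_univ, true_and]
    exact ⟨hqm.trans, hqm.symm.trans⟩
  have herase : (univ.filter (fun i => ∀ j, e.SameCycle i j → i ≤ j)).erase m =
      univ.filter (fun i => (∀ j, e.SameCycle i j → i ≤ j) ∧ ¬ e.SameCycle q i) := by
    ext i
    simp only [mem_erase, mem_filter, mem_univ, true_and]
    refine ⟨fun ⟨him, hi⟩ => ⟨hi, fun hqi => him ?_⟩, fun ⟨hi, hqi⟩ => ⟨?_, hi⟩⟩
    · exact le_antisymm (hi m (hqi.symm.trans hqm)) (hm_le i hqi)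
    · rintro rfl
      exact hqi hqm
  rw [frobTerm, ← mul_prod_erase _ _ hm_mem, herase, hCm, prod_update_of_mem hqC,
    prod_eq_mul_prod_sdiff_singleton_of_mem hqC a, mul_assoc]
  congr 1
  refine prod_congr rfl fun i hi => congrArg f (prod_congr rfl fun j hj => ?_)
  refine Function.update_of_ne (fun hjq => (mem_filter.1 hi).2.2 ?_) _ a
  exact (hjq ▸ (mem_filter.1 hj).2).symm

theorem frobTerm_cons_decomposeFin_symm_succ (b : A) (a : Fin n → A) (q : Fin n)
    (e : Perm (Fin n)) :
    frobTerm f (Fin.cons b a) (decomposeFin.symm (q.succ, e)) =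
      frobTerm f (Function.update a q (b * a q)) e := by
  rw [frobTerm_eq_mul_of_sameCycle_succ_iff f _ e (sameCycle_decomposeFin_symm_succ_succ q.succ e),
    frobTerm_update_mul, prod_filter, Fin.prod_univ_succ, if_pos .rfl]
  simp only [sameCycle_decomposeFin_symm_zero_succ, Fin.cons_zero, Fin.cons_succ, ← prod_filter]

end FrobeniusTerm

section FrobeniusTransformation

open Equiv Perm

variable (f : A → B) {n : ℕ}

theorem phiPerm_of_isEmpty (a : Fin 0 → A) : PhiPerm f a = 1 := by
  simp [PhiPerm, frobTerm]

theorem phiPerm_cons (b : A) (a : Fin n → A) :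
    PhiPerm f (Fin.cons b a) =
      f b * PhiPerm f a - ∑ j : Fin n, PhiPerm f (Function.update a j (b * a j)) := by
  rw [PhiPerm, ← decomposeFin.symm.sum_comp, Fintype.sum_prod_type, Fin.sum_univ_succ,
    sub_eq_add_neg, ← sum_neg_distrib, PhiPerm, mul_sum]
  congr 1
  · refine sum_congr rfl fun e _ => ?_
    rw [frobTerm_cons_decomposeFin_symm_zero, decomposeFin.symm_sign, if_pos rfl, one_mul,
      mul_smul_comm]
  · refine sum_congr rfl fun q _ => ?_
    rw [PhiPerm, ← sum_neg_distrib]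
    refine sum_congr rfl fun e _ => ?_
    rw [frobTerm_cons_decomposeFin_symm_succ, decomposeFin.symm_sign, if_neg (Fin.succ_ne_zero q)]
    push_cast
    rw [neg_one_mul, neg_smul]

theorem mul_phiPerm_of_phiPerm_succ_eq_zero (hf : ∀ v : Fin (n + 1) → A, PhiPerm f v = 0)
    (b : A) (a : Fin n → A) :
    f b * PhiPerm f a = ∑ j : Fin n, PhiPerm f (Function.update a j (b * a j)) :=
  sub_eq_zero.1 (phiPerm_cons f b a ▸ hf (Fin.cons b a))

theorem phiPerm_one (m : ℕ) : PhiPerm f (1 : Fin m → A) = (descPochhammer B m).eval (f 1) := by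
  induction m with
  | zero => rw [phiPerm_of_isEmpty, descPochhammer_zero, Polynomial.eval_one]
  | succ m ih =>
    have hcons : (1 : Fin (m + 1) → A) = Fin.cons 1 1 := (Fin.cons_self_tail 1).symm
    have hupdate (j : Fin m) : Function.update (1 : Fin m → A) j 1 = 1 :=
      Function.update_eq_self j 1
    simp only [hcons, phiPerm_cons, Pi.one_apply, mul_one, hupdate, ih, sum_const,
      card_univ, Fintype.card_fin, nsmul_eq_mul, descPochhammer_succ_eval]
    ring

theorem phiPerm_mul_phiPerm_eq_sum_embedding (hf : ∀ v : Fin (n + 1) → A, PhiPerm f v = 0)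
    {l : ℕ} (a : Fin n → A) (b : Fin l → A) :
    PhiPerm f a * PhiPerm f b = ∑ g : Fin l ↪ Fin n, PhiPerm f (fiberMul a g b) := by
  induction l generalizing a with
  | zero => rw [phiPerm_of_isEmpty, mul_one, Fintype.sum_unique, fiberMul_of_isEmpty]
  | succ l ih =>
    refine Fin.consCases (fun c b => ?_) b
    calc PhiPerm f a * PhiPerm f (Fin.cons c b)
        = ∑ i, PhiPerm f (Function.update a i (c * a i)) * PhiPerm f b -
            ∑ j, PhiPerm f a * PhiPerm f (Function.update b j (c * b j)) := by
          rw [phiPerm_cons, mul_sub, ← mul_assoc, mul_comm (PhiPerm f a),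
            mul_phiPerm_of_phiPerm_succ_eq_zero f hf, sum_mul, mul_sum]
      _ = ∑ g : Fin l ↪ Fin n, (∑ i, PhiPerm f (fiberMul (Function.update a i (c * a i)) g b) -
            ∑ j, PhiPerm f (fiberMul (Function.update a (g j) (c * a (g j))) g b)) := by
          simp only [ih, fiberMul_update_of_injective (EmbeddingLike.injective _)]
          rw [sum_sub_distrib, sum_comm, sum_comm (γ := Fin l)]
      _ = ∑ g : Fin l ↪ Fin n, ∑ i : {i // i ∉ Set.range g},
            PhiPerm f (fiberMul (Function.update a i (c * a i)) g b) := by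
          refine sum_congr rfl fun g _ => ?_
          exact (g.sum_subtype_notMem_range
            fun i => PhiPerm f (fiberMul (Function.update a i (c * a i)) g b)).symm
      _ = ∑ g : Fin (l + 1) ↪ Fin n, PhiPerm f (fiberMul a g (Fin.cons c b)) := by
          rw [← (Equiv.embeddingFinSucc l (Fin n)).symm.sum_comp, Fintype.sum_sigma]
          simp only [Equiv.coe_embeddingFinSucc_symm, fiberMul_cons]

theorem phiPerm_mul_phiPerm (hf : ∀ v : Fin (n + 1) → A, PhiPerm f v = 0) (a b : Fin n → A) :
    PhiPerm f a * PhiPerm f b = ∑ τ : Perm (Fin n), PhiPerm f (fun i => a i * b (τ.symm i)) := by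
  rw [phiPerm_mul_phiPerm_eq_sum_embedding f hf, ← (Equiv.embeddingEquivOfFinite _).symm.sum_comp]
  exact sum_congr rfl fun τ _ => congrArg (PhiPerm f) (fiberMul_perm a b τ)

end FrobeniusTransformation

open scoped TensorProduct in
open PiTensorProduct in
theorem PiTensorProduct.lift_mul_lift_eq_sum_reindex {R E F ι : Type*} [CommSemiring R]
    [Semiring E] [Algebra R E] [Semiring F] [Algebra R F] [Fintype ι] [DecidableEq ι]
    (M : MultilinearMap R (fun _ : ι => E) F)
    (hM : ∀ a b : ι → E, M a * M b = ∑ τ : Equiv.Perm ι, M (fun i => a i * b (τ.symm i)))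
    (x y : ⨂[R] _ : ι, E) :
    lift M x * lift M y = ∑ τ : Equiv.Perm ι, lift M (x * reindex R (fun _ => E) τ y) := by
  induction x using PiTensorProduct.induction_on with
  | smul_tprod r a =>
    induction y using PiTensorProduct.induction_on with
    | smul_tprod s b =>
      simp only [map_smul, lift.tprod, smul_mul_smul_comm, hM, smul_sum, reindex_tprod,
        tprod_mul_tprod]
      rfl
    | add y₁ y₂ h₁ h₂ => simp only [map_add, mul_add, h₁, h₂, sum_add_distrib]
  | add x₁ x₂ h₁ h₂ => simp only [map_add, add_mul, h₁, h₂, sum_add_distrib]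

open scoped TensorProduct in
open PiTensorProduct in
/-- Theorem 2.8: if `f` is a Frobenius `n`-homomorphism, then `Φ_n(f)/n!`,
restricted to the subalgebra of symmetric tensors in `A^{⊗n}`, is a ring
homomorphism.  Here `M` is the multilinear extension of `Φ_n(f)` to `A^{⊗n}`
(its lift is the linear extension), a tensor is symmetric when it is fixed by
every permutation of the factors, and being a ring homomorphism amounts to
multiplicativity and unitality (additivity holds since the lift is linear). -/
theorem phi_div_factorial_ringHom_on_symmetric {k : Type*} [Field k] [CharZero k]
    [Algebra k A] [Algebra k B] (n : ℕ) (f : A →ₗ[k] B)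
    (hf : IsFrobeniusHom (f : A → B) n)
    (M : MultilinearMap k (fun _ : Fin n => A) B)
    (hM : ∀ a : Fin n → A, M a = PhiPerm (f : A → B) a) :
    (∀ x y : ⨂[k] (_ : Fin n), A,
      (∀ σ : Equiv.Perm (Fin n), reindex k (fun _ => A) σ x = x) →
      (∀ σ : Equiv.Perm (Fin n), reindex k (fun _ => A) σ y = y) →
      (n.factorial : k)⁻¹ • lift M (x * y) =
        ((n.factorial : k)⁻¹ • lift M x) * ((n.factorial : k)⁻¹ • lift M y)) ∧
    (n.factorial : k)⁻¹ • lift M (1 : ⨂[k] (_ : Fin n), A) = 1 := by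
  obtain ⟨hvanish, hone⟩ := hf
  have hfac : (n.factorial : k) ≠ 0 := Nat.cast_ne_zero.2 n.factorial_ne_zero
  refine ⟨fun x y _ hy => ?_, ?_⟩
  · have hmul : lift M x * lift M y = n.factorial • lift M (x * y) := by
      rw [lift_mul_lift_eq_sum_reindex M (by simpa only [hM] using phiPerm_mul_phiPerm f hvanish)]
      simp only [hy, sum_const, card_univ, Fintype.card_perm, Fintype.card_fin]
    rw [smul_mul_smul_comm, hmul, ← Nat.cast_smul_eq_nsmul k, smul_smul, inv_mul_cancel_right₀ hfac]
  · rw [one_def, lift.tprod, hM, phiPerm_one, hone, descPochhammer_eval_eq_descFactorial,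
      Nat.descFactorial_self, ← map_natCast (algebraMap k B), Algebra.algebraMap_eq_smul_one,
      inv_smul_smul₀ hfac]
end

section
/- Let A be a commutative algebra, B an integral domain of characteristic zero, f : A → B linear, and a ∈ A an idempotent (a² = a). If Φ_{n+1}(f)(a,a,…,a) = 0 then f(a) = k·1_B for some integer 0 ≤ k ≤ n. -/
/-! For an idempotent `a`, every product `a * a_j` in the list `(a, …, a)` is again `a`, so the
recursion collapses to `Φ_{n+1}(f)(a, …, a) = (f a - n) Φ_n(f)(a, …, a)`. Hence
`Φ_{n+1}(f)(a, …, a) = ∏_{k ≤ n} (f a - k)`, and in a domain one of the factors vanishes. -/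

open Finset

variable {A B : Type*} [CommRing A] [CommRing B]

/-- Inductive Frobenius transformation on lists:
`Φ_{n+1}(f)(a₁,…,a_{n+1}) = f(a₁)Φ_n(f)(a₂,…) − ∑_j Φ_n(f)(a₂,…,a₁a_j,…)`. -/
def PhiL (f : A → B) : List A → B
  | [] => 1
  | a :: l => f a * PhiL f l -
      ∑ j ∈ Finset.range l.length, PhiL f (l.modify j (fun x => a * x))
termination_by l => l.length
decreasing_by all_goals simp [List.length_modify]

theorem List.modify_replicate_of_apply_eq {α : Type*} {g : α → α} {a : α} (hg : g a = a)
    (n j : ℕ) : (List.replicate n a).modify j g = List.replicate n a := by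
  apply List.ext_getElem (by simp)
  intro i _ _
  simp only [List.getElem_modify, List.getElem_replicate]
  split <;> simp [hg]

theorem PhiL_replicate_of_isIdempotentElem (f : A → B) {a : A} (ha : IsIdempotentElem a)
    (n : ℕ) : PhiL f (List.replicate n a) = ∏ k ∈ range n, (f a - k) := by
  induction n with
  | zero => simp [PhiL]
  | succ n ih =>
    rw [List.replicate_succ, PhiL]
    simp only [List.length_replicate, List.modify_replicate_of_apply_eq ha.eq, ih, sum_const,
      card_range, nsmul_eq_mul, prod_range_succ]
    ring

theorem f_idempotent_eq_nat_general {F : Type*} [Field F] [IsDomain B]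
    [Algebra F A] [Algebra F B] (f : A →ₗ[F] B) (n : ℕ) (a : A)
    (ha : a ^ 2 = a)
    (h : PhiL (f : A → B) (List.replicate (n + 1) a) = 0) :
    ∃ j : ℕ, j ≤ n ∧ f a = (j : B) := by
  have ha' : IsIdempotentElem a := by rwa [IsIdempotentElem, ← sq]
  rw [PhiL_replicate_of_isIdempotentElem _ ha'] at h
  obtain ⟨k, hk, hfk⟩ := prod_eq_zero_iff.mp h
  exact ⟨k, Nat.lt_succ_iff.mp (mem_range.mp hk), sub_eq_zero.mp hfk⟩

/-- If `B` is an integral domain of characteristic zero, `a` is idempotent and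
`Φ_{n+1}(f)(a,…,a) = 0`, then `f(a) = k·1_B` for some integer `0 ≤ k ≤ n`. -/
theorem f_idempotent_eq_nat {F : Type*} [Field F] [IsDomain B] [CharZero B]
    [Algebra F A] [Algebra F B] (f : A →ₗ[F] B) (n : ℕ) (a : A)
    (ha : a ^ 2 = a)
    (h : PhiL (f : A → B) (List.replicate (n + 1) a) = 0) :
    ∃ j : ℕ, j ≤ n ∧ f a = (j : B) :=
  f_idempotent_eq_nat_general f n a ha h
end

section
/- For a linear map f : A → B between commutative algebras and any a ∈ A, Φ_n(f)(a, 1, 1, …, 1) = f(a)·(f(1)−1)(f(1)−2)⋯(f(1)−(n−1)). -/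
/-!
Leading ones only contribute scalars: `Φ(1 :: l) = (f 1 - |l|) Φ(l)`, since multiplying an entry
by `1` changes nothing. Hence each term of the defining sum of `Φ(a, 1, …, 1)`, in which `a` sits in
position `j`, equals `Φ(a, 1, …, 1)` of smaller length times the factors coming from the ones in
front of `a`; by strong induction all `m` terms equal `f a (f 1 - 1)⋯(f 1 - (m - 1))`, and
`f a · f 1 (f 1 - 1)⋯ - m · f a (f 1 - 1)⋯` is the claimed product.
-/

open Finset

variable {A B : Type*} [CommRing A] [CommRing B]

theorem List.modify_replicate_one_mul {M : Type*} [MulOneClass M] {a : M} {m j : ℕ}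
    (hj : j < m) :
    (List.replicate m (1 : M)).modify j (fun x => a * x)
      = List.replicate j 1 ++ a :: List.replicate (m - (j + 1)) 1 := by
  rw [List.modify_eq_take_cons_drop (by simpa), List.take_replicate, List.drop_replicate,
    List.getElem_replicate, mul_one, min_eq_left hj.le]

section PhiL

variable (f : A → B)

theorem PhiL_cons (a : A) (l : List A) :
    PhiL f (a :: l) = f a * PhiL f l -
      ∑ j ∈ range l.length, PhiL f (l.modify j (fun x => a * x)) := by
  rw [PhiL]

theorem PhiL_one_cons (l : List A) : PhiL f (1 :: l) = (f 1 - l.length) * PhiL f l := by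
  have hmodify (j : ℕ) : l.modify j (fun x => 1 * x) = l := by
    simp only [one_mul]; exact List.modify_id j l
  simp only [PhiL_cons, hmodify, sum_const, card_range, nsmul_eq_mul]
  ring

theorem PhiL_replicate_one_append (k : ℕ) (l : List A) :
    PhiL f (List.replicate k 1 ++ l) =
      (∏ i ∈ range k, (f 1 - (l.length + i : ℕ))) * PhiL f l := by
  induction k with
  | zero => simp
  | succ k ih =>
    rw [List.replicate_succ, List.cons_append, PhiL_one_cons, ih, prod_range_succ,
      List.length_append, List.length_replicate, add_comm k]
    ring

theorem PhiL_replicate_one (m : ℕ) :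
    PhiL f (List.replicate m (1 : A)) = ∏ i ∈ range m, (f 1 - i) := by
  simpa [PhiL] using PhiL_replicate_one_append f m []

theorem PhiL_cons_replicate_one (a : A) (m : ℕ) :
    PhiL f (a :: List.replicate m 1) = f a * ∏ i ∈ range m, (f 1 - (i + 1 : B)) := by
  induction m using Nat.strong_induction_on with
  | _ m ih =>
  have hsummand (j : ℕ) (hjm : j ∈ range m) :
      PhiL f ((List.replicate m 1).modify j (fun x => a * x)) =
        f a * ∏ i ∈ range (m - 1), (f 1 - (i + 1 : B)) := by
    have hj : j < m := mem_range.mp hjm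
    obtain ⟨r, rfl⟩ : ∃ r, m = j + r + 1 := ⟨m - (j + 1), by omega⟩
    rw [List.modify_replicate_one_mul hj, show j + r + 1 - (j + 1) = r by omega,
      PhiL_replicate_one_append, List.length_cons, List.length_replicate, ih r (by omega),
      show j + r + 1 - 1 = r + j by omega, prod_range_add]
    simp only [Nat.cast_add, Nat.cast_one, add_right_comm _ (1 : B)]
    ring
  rw [PhiL_cons, List.length_replicate, sum_congr rfl hsummand, PhiL_replicate_one]
  cases m with
  | zero => simp
  | succ m =>
    rw [Nat.add_sub_cancel, sum_const, card_range, nsmul_eq_mul,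
      prod_range_succ' (fun i : ℕ => f 1 - i), prod_range_succ (fun i : ℕ => f 1 - (i + 1 : B))]
    push_cast
    ring

end PhiL

/-- `Φ_{n+1}(f)(a,1,…,1) = f(a)(f(1)−1)(f(1)−2)⋯(f(1)−n)` (Lemma 2.15). -/
theorem phi_on_a_and_ones {F : Type*} [Field F]
    [Algebra F A] [Algebra F B] (f : A →ₗ[F] B) (n : ℕ) (a : A) :
    PhiL (f : A → B) (a :: List.replicate n 1) =
      f a * ∏ j ∈ Finset.range n, (f 1 - (j + 1 : B)) :=
  PhiL_cons_replicate_one f a n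
end

section
/- Let X be a finite set and C(X) the algebra of complex-valued functions on X. A linear map f : C(X) → ℂ is a Frobenius n-homomorphism if and only if there exist points x₁, …, x_n ∈ X (with repetitions allowed) such that f(g) = g(x₁) + ⋯ + g(x_n) for all g ∈ C(X). Consequently the evaluation map Sym^n(X) → Hom(C(X), ℂ) is a bijection onto the set of Frobenius n-homomorphisms. -/
open Finset

variable {A B : Type*} [CommRing A] [CommRing B]
/-!
Expanding `Σ_{k+1}` according to the position of `0` (`Equiv.Perm.decomposeFin`: either `0` is a
fixed point, or it is inserted into the cycle of some `q + 1`) gives the recursion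
`Φ_{k+1}(f)(a₀, a) = f(a₀) Φ_k(f)(a) - ∑_q Φ_k(f)(a with a_q replaced by a_q a₀)`.
On point masses it yields `Φ_k(f)(δ_{y₁}, …, δ_{y_k}) = ∏_x c_x (c_x - 1) ⋯ (c_x - m_x + 1)`,
where `c_x = f(δ_x)` and `m_x` is the multiplicity of `x` among the `yᵢ`; for linear `f` the
map `Φ_k(f)` is multilinear, so these values determine it.
If `Φ_{n+1}(f) = 0`, taking all `yᵢ = x` forces `c_x ∈ {0, …, n}`, and `f(1) = ∑ c_x = n` makes
the `c_x` the multiplicities of `n` points. Conversely, if the `c_x` are such multiplicities,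
any `n + 1` points exceed one of them, so every product above vanishes.
-/

namespace Equiv.Perm

variable {α β : Type*}

theorem SameCycle.map_of_sameCycle_apply {τ : Perm α} {π : Perm β} {g : α → β}
    (hg : ∀ z, π.SameCycle (g (τ z)) (g z)) {x y : α} (h : τ.SameCycle x y) :
    π.SameCycle (g x) (g y) := by
  obtain ⟨i, rfl⟩ := h
  induction i using Int.induction_on with
  | zero => rfl
  | succ i ih => rw [add_comm, zpow_one_add, mul_apply]; exact ih.trans (hg _).symm
  | pred i ih =>
    rw [sub_eq_neg_add, zpow_add, zpow_neg_one, mul_apply]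
    refine ih.trans ?_
    simpa using hg (τ⁻¹ ((τ ^ (-(i : ℤ))) x))

/-- Composing with `swap a b` a permutation fixing `a` inserts `a` into the cycle of `b`. -/
theorem sameCycle_swap_mul_iff [DecidableEq α] {π : Perm α} {a b : α} (ha : π a = a)
    {x y : α} :
    (swap a b * π).SameCycle x y ↔
      π.SameCycle (if x = a then b else x) (if y = a then b else y) := by
  set r : α → α := fun x => if x = a then b else x
  have hπ_ne {z : α} (hz : z ≠ a) : π z ≠ a := fun h => hz (π.injective (h.trans ha.symm))
  have step_π (z : α) : π.SameCycle (r ((swap a b * π) z)) (r z) := by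
    by_cases hz : z = a
    · subst hz; simp [r, ha]; rfl
    · by_cases hb : π z = b
      · simp only [r, mul_apply, hb, swap_apply_right, if_pos, if_neg hz]
        exact hb ▸ (sameCycle_apply_left).2 (SameCycle.refl _ _)
      · simp only [r, mul_apply, swap_apply_of_ne_of_ne (hπ_ne hz) hb, if_neg (hπ_ne hz), if_neg hz]
        exact sameCycle_apply_left.2 (SameCycle.refl _ _)
  have step_τ (z : α) : (swap a b * π).SameCycle (π z) z := by
    by_cases hz : z = a
    · subst hz; rw [ha]
    · by_cases hb : π z = b
      · exact SameCycle.symm ⟨2, by simp [pow_two, hb, ha]⟩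
      · exact SameCycle.symm ⟨1, by simp [swap_apply_of_ne_of_ne (hπ_ne hz) hb]⟩
  have to_r (z : α) : (swap a b * π).SameCycle z (r z) := by
    by_cases hz : z = a
    · subst hz; exact ⟨1, by simp [r, ha]⟩
    · simp only [r, if_neg hz]; rfl
  constructor
  · exact SameCycle.map_of_sameCycle_apply step_π
  · intro h
    exact (to_r x).trans ((h.map_of_sameCycle_apply (g := id) step_τ).trans (to_r y).symm)

section CycleBlocks

variable [Fintype α] [DecidableEq α] [Fintype β] [DecidableEq β]

def cycleBlock (σ : Perm α) (i : α) : Finset α := univ.filter (σ.SameCycle i)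

def cycleBlocks (σ : Perm α) : Finset (Finset α) := univ.image σ.cycleBlock

@[simp]
theorem mem_cycleBlock {σ : Perm α} {i j : α} : j ∈ σ.cycleBlock i ↔ σ.SameCycle i j := by
  simp [cycleBlock]

theorem cycleBlock_eq_cycleBlock_iff {σ : Perm α} {i j : α} :
    σ.cycleBlock i = σ.cycleBlock j ↔ σ.SameCycle i j := by
  refine ⟨fun h => mem_cycleBlock.1 (h ▸ mem_cycleBlock.2 (.refl _ _)), fun h => ?_⟩
  ext z
  simp only [mem_cycleBlock]
  exact ⟨h.symm.trans, h.trans⟩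

theorem mem_cycleBlocks {σ : Perm α} {d : Finset α} :
    d ∈ σ.cycleBlocks ↔ ∃ i, σ.cycleBlock i = d := by
  simp [cycleBlocks]

theorem cycleBlock_eq_of_mem {σ : Perm α} {d : Finset α} (hd : d ∈ σ.cycleBlocks) {i : α}
    (hi : i ∈ d) : σ.cycleBlock i = d := by
  obtain ⟨j, rfl⟩ := mem_cycleBlocks.1 hd
  exact cycleBlock_eq_cycleBlock_iff.2 (mem_cycleBlock.1 hi).symm

theorem cycleBlocks_eq_image_preimage {τ : Perm β} {σ : Perm α} {c : β → α}
    (hc : Function.Surjective c) (h : ∀ x y, τ.SameCycle x y ↔ σ.SameCycle (c x) (c y)) :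
    τ.cycleBlocks = σ.cycleBlocks.image fun d => univ.filter (c · ∈ d) := by
  have block_eq (x : β) : τ.cycleBlock x = univ.filter (c · ∈ σ.cycleBlock (c x)) := by
    ext y; simp [h]
  ext D
  simp only [mem_cycleBlocks, mem_image, block_eq]
  exact ⟨fun ⟨x, hx⟩ => ⟨_, ⟨c x, rfl⟩, hx⟩, fun ⟨_, ⟨i, rfl⟩, hD⟩ =>
    (hc i).elim fun x hx => ⟨x, hx ▸ hD⟩⟩

end CycleBlocks

section DecomposeFin

variable {k : ℕ}

theorem decomposeFin_symm_zero_eq_extendDomain (σ : Perm (Fin k)) :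
    decomposeFin.symm (0, σ) = σ.extendDomain (finSuccAboveEquiv 0) := by
  ext x
  induction x using Fin.cases with
  | zero => rw [extendDomain_apply_not_subtype _ _ (by simp)]; simp
  | succ i =>
    have := extendDomain_apply_image σ (finSuccAboveEquiv 0) i
    simp only [finSuccAboveEquiv_apply, Fin.succAbove_zero] at this
    simp [this]

theorem decomposeFin_symm_eq_swap_mul (p : Fin (k + 1)) (σ : Perm (Fin k)) :
    decomposeFin.symm (p, σ) = swap 0 p * decomposeFin.symm (0, σ) := by
  ext x
  induction x using Fin.cases <;> simp

theorem sameCycle_decomposeFin_symm_zero_succ_succ {σ : Perm (Fin k)} {i j : Fin k} :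
    (decomposeFin.symm (0, σ)).SameCycle i.succ j.succ ↔ σ.SameCycle i j := by
  rw [decomposeFin_symm_zero_eq_extendDomain]
  simpa [finSuccAboveEquiv_apply] using sameCycle_extendDomain (g := σ) (f := finSuccAboveEquiv 0)

theorem sameCycle_decomposeFin_symm_zero_zero_left {σ : Perm (Fin k)} {y : Fin (k + 1)} :
    (decomposeFin.symm (0, σ)).SameCycle 0 y ↔ y = 0 :=
  ⟨fun h => (h.eq_of_left (decomposeFin_symm_apply_zero 0 σ)).symm, fun h => h ▸ .refl _ _⟩

theorem sameCycle_decomposeFin_symm_succ {σ : Perm (Fin k)} {q : Fin k} {x y : Fin (k + 1)} :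
    (decomposeFin.symm (q.succ, σ)).SameCycle x y ↔
      σ.SameCycle ((Fin.cons q id : Fin (k + 1) → Fin k) x)
        ((Fin.cons q id : Fin (k + 1) → Fin k) y) := by
  have h_succ (z : Fin (k + 1)) :
      (if z = 0 then q.succ else z) = ((Fin.cons q id : Fin (k + 1) → Fin k) z).succ := by
    induction z using Fin.cases <;> simp [Fin.succ_ne_zero]
  rw [decomposeFin_symm_eq_swap_mul, sameCycle_swap_mul_iff (decomposeFin_symm_apply_zero 0 σ),
    h_succ, h_succ, sameCycle_decomposeFin_symm_zero_succ_succ]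

theorem cycleBlocks_decomposeFin_symm_zero (σ : Perm (Fin k)) :
    (decomposeFin.symm (0, σ)).cycleBlocks =
      insert {0} (σ.cycleBlocks.image (map (Fin.succEmb k))) := by
  have block_zero : (decomposeFin.symm (0, σ)).cycleBlock 0 = {0} := by
    ext y; simp [sameCycle_decomposeFin_symm_zero_zero_left]
  have block_succ (i : Fin k) :
      (decomposeFin.symm (0, σ)).cycleBlock i.succ = (σ.cycleBlock i).map (Fin.succEmb k) := by
    ext y
    induction y using Fin.cases with
    | zero =>
      simpa [Fin.succ_ne_zero] using
        fun h => Fin.succ_ne_zero i (sameCycle_decomposeFin_symm_zero_zero_left.1 h.symm)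
    | succ j => simp [sameCycle_decomposeFin_symm_zero_succ_succ]
  ext D
  simp only [mem_cycleBlocks, Fin.exists_fin_succ, block_zero, block_succ, mem_insert, mem_image]
  aesop

end DecomposeFin

end Equiv.Perm

open Equiv Equiv.Perm

section FrobTerm

variable {k : ℕ}

theorem frobTerm_eq_prod_cycleBlocks (f : A → B) (a : Fin k → A) (σ : Perm (Fin k)) :
    frobTerm f a σ = ∏ d ∈ σ.cycleBlocks, f (∏ j ∈ d, a j) := by
  set mins := univ.filter fun i => ∀ j, σ.SameCycle i j → i ≤ j
  have inj : Set.InjOn σ.cycleBlock mins := fun i hi j hj hij => by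
    have hij := cycleBlock_eq_cycleBlock_iff.1 hij
    exact le_antisymm ((mem_filter.1 hi).2 j hij) ((mem_filter.1 hj).2 i hij.symm)
  have image_mins : mins.image σ.cycleBlock = σ.cycleBlocks := by
    refine (image_subset_image (subset_univ _)).antisymm fun d hd => ?_
    obtain ⟨x, rfl⟩ := mem_cycleBlocks.1 hd
    have hne : (σ.cycleBlock x).Nonempty := ⟨x, mem_cycleBlock.2 (.refl _ _)⟩
    have hmin := mem_cycleBlock.1 ((σ.cycleBlock x).min'_mem hne)
    refine mem_image.2 ⟨_, mem_filter.2 ⟨mem_univ _, fun j hj => ?_⟩,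
      cycleBlock_eq_cycleBlock_iff.2 hmin.symm⟩
    exact min'_le _ _ (mem_cycleBlock.2 (hmin.trans hj))
  rw [← image_mins, prod_image inj]
  rfl

theorem frobTerm_update (f : A → B) (a : Fin k → A) (σ : Perm (Fin k)) (p : Fin k) (v : A) :
    frobTerm f (Function.update a p v) σ =
      f (v * ∏ j ∈ (σ.cycleBlock p).erase p, a j) *
        ∏ d ∈ σ.cycleBlocks.erase (σ.cycleBlock p), f (∏ j ∈ d, a j) := by
  have hp : p ∈ σ.cycleBlock p := mem_cycleBlock.2 (.refl _ _)
  rw [frobTerm_eq_prod_cycleBlocks,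
    ← mul_prod_erase _ _ (mem_cycleBlocks.2 ⟨p, rfl⟩), prod_update_of_mem hp,
    sdiff_singleton_eq_erase]
  congr 1
  refine prod_congr rfl fun d hd => ?_
  rw [prod_update_of_notMem fun hpd =>
    (mem_erase.1 hd).1 (cycleBlock_eq_of_mem (mem_erase.1 hd).2 hpd).symm]

theorem frobTerm_decomposeFin_symm_zero (f : A → B) (a : Fin (k + 1) → A) (σ : Perm (Fin k)) :
    frobTerm f a (decomposeFin.symm (0, σ)) = f (a 0) * frobTerm f (fun i => a i.succ) σ := by
  rw [frobTerm_eq_prod_cycleBlocks, frobTerm_eq_prod_cycleBlocks,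
    cycleBlocks_decomposeFin_symm_zero, prod_insert, prod_singleton,
    prod_image fun _ _ _ _ h => map_injective _ h]
  · simp
  · simp only [mem_image, not_exists, not_and]
    exact fun d _ h => by simpa using congrArg (0 ∈ ·) h

theorem frobTerm_decomposeFin_symm_succ (f : A → B) (a : Fin (k + 1) → A) (σ : Perm (Fin k))
    (q : Fin k) :
    frobTerm f a (decomposeFin.symm (q.succ, σ)) =
      frobTerm f (Function.update (fun i => a i.succ) q (a q.succ * a 0)) σ := by
  set c : Fin (k + 1) → Fin k := Fin.cons q id
  have hc : Function.Surjective c := fun i => ⟨i.succ, rfl⟩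
  rw [frobTerm_eq_prod_cycleBlocks, frobTerm_eq_prod_cycleBlocks,
    cycleBlocks_eq_image_preimage hc fun _ _ => sameCycle_decomposeFin_symm_succ,
    prod_image fun d _ d' _ h => ?inj]
  case inj =>
    ext i
    simpa [c] using congrArg (i.succ ∈ ·) h
  refine prod_congr rfl fun d _ => congrArg f ?_
  rw [prod_filter, Fin.prod_univ_succ]
  simp only [c, Fin.cons_zero, Fin.cons_succ, id, prod_ite_mem, univ_inter]
  by_cases hq : q ∈ d
  · rw [if_pos hq, prod_update_of_mem hq, ← mul_prod_erase _ _ hq, sdiff_singleton_eq_erase]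
    ring
  · rw [if_neg hq, prod_update_of_notMem hq, one_mul]

end FrobTerm

section PhiPerm

variable {k : ℕ}

theorem PhiPerm_succ (f : A → B) (a : Fin (k + 1) → A) :
    PhiPerm f a = f (a 0) * PhiPerm f (fun i => a i.succ) -
      ∑ q : Fin k, PhiPerm f (Function.update (fun i => a i.succ) q (a q.succ * a 0)) := by
  unfold PhiPerm
  rw [← decomposeFin.symm.sum_comp, Fintype.sum_prod_type, Fin.sum_univ_succ, sub_eq_add_neg,
    mul_sum, ← sum_neg_distrib]
  congr 1
  · refine sum_congr rfl fun σ _ => ?_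
    rw [decomposeFin.symm_sign, if_pos rfl, one_mul, frobTerm_decomposeFin_symm_zero,
      mul_smul_comm]
  · refine sum_congr rfl fun q _ => ?_
    rw [← sum_neg_distrib]
    refine sum_congr rfl fun σ _ => ?_
    rw [decomposeFin.symm_sign, if_neg (Fin.succ_ne_zero q), frobTerm_decomposeFin_symm_succ,
      neg_one_mul, Units.val_neg, neg_smul]

variable {R : Type*} [CommRing R] [Algebra R A] [Algebra R B]

def PhiPerm.multilinearMap (f : A →ₗ[R] B) (k : ℕ) : MultilinearMap R (fun _ : Fin k => A) B where
  toFun := PhiPerm f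
  map_update_add' := by
    intro inst a p x y
    obtain rfl : inst = instDecidableEqFin k := Subsingleton.elim _ _
    simp only [PhiPerm, frobTerm_update, add_mul, map_add, ← sum_add_distrib, smul_add]
  map_update_smul' := by
    intro inst a p c x
    obtain rfl : inst = instDecidableEqFin k := Subsingleton.elim _ _
    simp only [PhiPerm, frobTerm_update, smul_mul_assoc, map_smul, smul_sum, smul_comm c]

end PhiPerm

theorem Pi.single_one_mul_single_one {X R : Type*} [DecidableEq X] [MulZeroOneClass R]
    (x y : X) :
    (Pi.single x 1 * Pi.single y 1 : X → R) = if x = y then Pi.single x 1 else 0 := by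
  ext z
  by_cases hxy : x = y <;> by_cases hzx : z = x <;> simp_all [Pi.single_apply]

section PointMasses

open Polynomial

variable {X R : Type*} [Fintype X] [DecidableEq X] [CommRing R] {k : ℕ}

theorem PhiPerm_update_zero {f : A → B} (hf : f 0 = 0) (a : Fin k → A) (p : Fin k) :
    PhiPerm f (Function.update a p 0) = 0 :=
  sum_eq_zero fun σ _ => by rw [frobTerm_update, zero_mul, hf, zero_mul, smul_zero]

theorem PhiPerm_single {f : (X → R) → B} (hf : f 0 = 0) (y : Fin k → X) :
    PhiPerm f (fun i => Pi.single (y i) 1) =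
      ∏ x, (descPochhammer B #{i | y i = x}).eval (f (Pi.single x 1)) := by
  induction k with
  | zero => simp [PhiPerm, frobTerm]
  | succ k ih =>
    have slot (q : Fin k) :
        PhiPerm f (Function.update (fun i => Pi.single (y i.succ) 1) q
          (Pi.single (y q.succ) 1 * Pi.single (y 0) 1)) =
        if y q.succ = y 0 then PhiPerm f (fun i => Pi.single (y i.succ) 1) else 0 := by
      rw [Pi.single_one_mul_single_one]
      by_cases h : y q.succ = y 0
      · rw [if_pos h, if_pos h]; exact congrArg _ (Function.update_eq_self _ _)
      · rw [if_neg h, if_neg h]; exact PhiPerm_update_zero hf _ _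
    rw [PhiPerm_succ]
    rw [sum_congr rfl fun q _ => slot q, sum_ite, sum_const_zero, add_zero, sum_const,
      ih, nsmul_eq_mul, ← sub_mul, mul_comm]
    simp_rw [Fin.card_filter_univ_succ]
    rw [← Fintype.prod_ite_eq (y 0) fun x => f (Pi.single x 1) - #{i : Fin k | y i.succ = x},
      ← prod_mul_distrib]
    refine prod_congr rfl fun x _ => ?_
    split_ifs with h
    · rw [descPochhammer_succ_eval]
    · rw [mul_one]

theorem PhiPerm_const_single {f : (X → R) → B} (hf : f 0 = 0) (z : X) :
    PhiPerm f (fun _ : Fin k => Pi.single z 1) = (descPochhammer B k).eval (f (Pi.single z 1)) := by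
  rw [PhiPerm_single hf fun _ => z, prod_eq_single z (fun w _ hw => by simp [Ne.symm hw]) (by simp)]
  simp

end PointMasses

theorem exists_eq_natCast_of_eval_descPochhammer_eq_zero {K : Type*} [CommRing K] [IsDomain K]
    {n : ℕ} {c : K} (h : (descPochhammer K (n + 1)).eval c = 0) : ∃ m ≤ n, c = m := by
  rw [descPochhammer_eval_eq_prod_range] at h
  obtain ⟨m, hm, hzero⟩ := prod_eq_zero_iff.1 h
  exact ⟨m, Nat.lt_succ_iff.1 (mem_range.1 hm), sub_eq_zero.1 hzero⟩

theorem Multiset.eq_of_forall_sum_map_eq {X R : Type*} [DecidableEq X] [NonAssocSemiring R]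
    [CharZero R] {m₁ m₂ : Multiset X} (h : ∀ g : X → R, (m₁.map g).sum = (m₂.map g).sum) :
    m₁ = m₂ := by
  have sum_map_single (m : Multiset X) (z : X) :
      (m.map (Pi.single z (1 : R))).sum = m.count z := by
    induction m using Multiset.induction_on with
    | empty => simp
    | cons a m ih =>
      rw [Multiset.map_cons, Multiset.sum_cons, ih, Multiset.count_cons, Pi.single_apply]
      by_cases h : a = z
      · simp [h, add_comm]
      · simp [h, Ne.symm h]
  ext z
  exact_mod_cast (sum_map_single m₁ z).symm.trans ((h _).trans (sum_map_single m₂ z))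

section Evaluations

variable {X : Type*} [Fintype X] {n k : ℕ}

theorem exists_sum_eq_sum_nsmul {M : Type*} [AddCommMonoid M] (m : X → ℕ) (hm : ∑ z, m z = n) :
    ∃ x : Fin n → X, ∀ g : X → M, ∑ i, g (x i) = ∑ z, m z • g z := by
  have hcard : Fintype.card (Σ z, Fin (m z)) = n := by simp [hm]
  let e := Fintype.equivFinOfCardEq hcard
  refine ⟨fun i => (e.symm i).1, fun g => ?_⟩
  rw [e.symm.sum_comp fun p => g p.1, Fintype.sum_sigma]
  simp

variable [DecidableEq X]

theorem PhiPerm_eq_sum_single {R : Type*} [CommRing R] [Algebra R B] (f : (X → R) →ₗ[R] B)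
    (a : Fin k → X → R) :
    PhiPerm f a = ∑ y : Fin k → X, (∏ i, a i (y i)) • PhiPerm f fun i => Pi.single (y i) 1 := by
  calc PhiPerm f a = PhiPerm.multilinearMap f k fun i => ∑ x, a i x • Pi.single x 1 := by
        simp_rw [← pi_eq_sum_univ']; rfl
    _ = _ := by simp_rw [MultilinearMap.map_sum, MultilinearMap.map_smul_univ]; rfl

theorem isFrobeniusHom_of_eq_sum_eval {R : Type*} [CommRing R] (f : (X → R) →ₗ[R] R)
    (x : Fin n → X) (hf : ∀ g, f g = ∑ i, g (x i)) : IsFrobeniusHom f n := by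
  have hf_single (z : X) : f (Pi.single z 1) = #{i | x i = z} := by
    simp [hf, Pi.single_apply]
  refine ⟨fun a => ?_, by simp [hf]⟩
  rw [PhiPerm_eq_sum_single]
  refine sum_eq_zero fun y _ => ?_
  -- pigeonhole: `y` has `n + 1` entries, `x` only `n`
  obtain ⟨z, -, hz⟩ : ∃ z ∈ univ, #{i | x i = z} < #{i | y i = z} := by
    refine exists_lt_of_sum_lt ?_
    rw [← card_eq_sum_card_fiberwise fun _ _ => mem_univ _,
      ← card_eq_sum_card_fiberwise fun _ _ => mem_univ _]
    simp
  rw [PhiPerm_single (map_zero f), prod_eq_zero (mem_univ z), smul_zero]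
  rw [hf_single, descPochhammer_eval_coe_nat_of_lt hz]

theorem exists_eq_sum_eval_of_isFrobeniusHom {K : Type*} [CommRing K] [IsDomain K] [CharZero K]
    (f : (X → K) →ₗ[K] K) (hf : IsFrobeniusHom f n) :
    ∃ x : Fin n → X, ∀ g, f g = ∑ i, g (x i) := by
  obtain ⟨hΦ, h_one⟩ := hf
  have f_apply (g : X → K) : f g = ∑ z, g z • f (Pi.single z 1) := by
    conv_lhs => rw [pi_eq_sum_univ' g]
    simp [map_sum]
  have hnat (z : X) : ∃ m ≤ n, f (Pi.single z 1) = m :=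
    exists_eq_natCast_of_eval_descPochhammer_eq_zero
      ((PhiPerm_const_single (map_zero f) z).symm.trans (hΦ _))
  choose m _ hm using hnat
  have hsum : ∑ z, m z = n := by
    rw [f_apply] at h_one
    exact_mod_cast (by simpa [hm] using h_one : (∑ z, (m z : K)) = n)
  obtain ⟨x, hx⟩ := exists_sum_eq_sum_nsmul (M := K) m hsum
  exact ⟨x, fun g => by simp [f_apply g, hx, hm, mul_comm]⟩

end Evaluations

/-- Theorem 3.1: for a finite set `X`, a linear map `f : C(X) → ℂ` is a Frobenius
`n`-homomorphism iff it is a sum of `n` point evaluations; moreover distinct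
points (multisets) give distinct functionals, so the evaluation map
`Sym^n(X) → Hom(C(X),ℂ)` is a bijection onto the set of Frobenius
`n`-homomorphisms. -/
theorem frobeniusHom_iff_sum_evals {X : Type*} [Fintype X] (n : ℕ) :
    (∀ f : (X → ℂ) →ₗ[ℂ] ℂ,
      IsFrobeniusHom (f : (X → ℂ) → ℂ) n ↔
        ∃ x : Fin n → X, ∀ g : X → ℂ, f g = ∑ i, g (x i)) ∧
    (∀ m₁ m₂ : Multiset X, Multiset.card m₁ = n → Multiset.card m₂ = n →
      (∀ g : X → ℂ, (m₁.map g).sum = (m₂.map g).sum) → m₁ = m₂) := by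
  classical
  exact ⟨fun f => ⟨exists_eq_sum_eval_of_isFrobeniusHom f,
      fun ⟨x, hx⟩ => isFrobeniusHom_of_eq_sum_eval f x hx⟩,
    fun _ _ _ _ => Multiset.eq_of_forall_sum_map_eq⟩
end
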